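/- A point q₁ ∈ ℝ³ belongs to B₁ if and only if there exist T ≥ 0 and a P1-admissible curve q : [0,T] → ℝ³ with q(0) = (0,0,0) and q(T) = q₁. In other words, the attainable set of the first flat sub-Lorentzian Martinet problem from the origin (the causal future of the origin) is exactly B₁. -/

import Mathlib

open MeasureTheory Set

noncomputable section

/-- A curve `(x, y, z) : [0, T] → ℝ³` is admissible for the first flat sub-Lorentzian
problem on the Martinet distribution: it is Lipschitz on `[0, T]` and for a.e.
`t ∈ [0, T]` it is differentiable with `y' ≥ |x'|` and `z' = x² y' / 2`. -/
def P1Admissible (T : ℝ) (x y z : ℝ → ℝ) : Prop :=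
  0 ≤ T ∧
  (∃ K : NNReal, LipschitzOnWith K x (Icc 0 T) ∧ LipschitzOnWith K y (Icc 0 T) ∧
    LipschitzOnWith K z (Icc 0 T)) ∧
  ∀ᵐ t ∂(volume.restrict (Icc 0 T)),
    HasDerivAt x (deriv x t) t ∧ HasDerivAt y (deriv y t) t ∧ HasDerivAt z (deriv z t) t ∧
    |deriv x t| ≤ deriv y t ∧ deriv z t = (x t) ^ 2 * deriv y t / 2

/-- The sub-Lorentzian length of an admissible curve of the first problem. -/
def P1Length (T : ℝ) (x y : ℝ → ℝ) : ℝ :=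
  ∫ t in (0:ℝ)..T, Real.sqrt ((deriv y t) ^ 2 - (deriv x t) ^ 2)

/-- `q₁` is reachable from the origin by a P1-admissible curve. -/
def P1Reaches (q₁ : ℝ × ℝ × ℝ) : Prop :=
  ∃ (T : ℝ) (x y z : ℝ → ℝ), P1Admissible T x y z ∧
    x 0 = 0 ∧ y 0 = 0 ∧ z 0 = 0 ∧ (x T, y T, z T) = q₁

/-- The sub-Lorentzian distance from the origin in the first problem: the supremum
of lengths of P1-admissible curves from the origin to `q₁` (`0` if there are none). -/
def P1dist (q₁ : ℝ × ℝ × ℝ) : ℝ :=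
  sSup (insert 0 {l : ℝ | ∃ (T : ℝ) (x y z : ℝ → ℝ), P1Admissible T x y z ∧
    x 0 = 0 ∧ y 0 = 0 ∧ z 0 = 0 ∧ (x T, y T, z T) = q₁ ∧ l = P1Length T x y})

/-- The candidate attainable set `B₁` of the first problem. -/
def B1 : Set (ℝ × ℝ × ℝ) :=
  {p | |p.1| ≤ p.2.1 ∧ |p.1| ^ 3 / 6 ≤ p.2.2 ∧
    p.2.2 ≤ (p.2.1 ^ 3 + 3 * p.1 ^ 2 * p.2.1 + 3 * |p.1| * p.2.1 ^ 2 - 3 * |p.1| ^ 3) / 24}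

/-!
Along an admissible curve the functions `y - x`, `z - x³/6` and
`(y³ + 3x²y + 3xy² - 3x³)/24 - z` have a.e. nonnegative derivatives, the last one as long as
`0 ≤ x ≤ y`. Admissible curves are Lipschitz, hence absolutely continuous, so these functions are
nondecreasing. Since `(|x|, y, z)` is admissible whenever `(x, y, z)` is, evaluating them for
`|x|` at the endpoints gives the three inequalities defining `B₁`.

Conversely, let `(x₁, y₁, z₁) ∈ B₁` and `b = |x₁|`. Take `y = t`, `z = ∫ x²/2`, and `x = ±` a tent
that vanishes until `t₀ = y₁ + b - 2a`, rises with slope one to height `a` and comes back down to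
`b` at time `y₁`; it ends at `z = (2a³ - b³)/6`. Choosing `a` with `2a³ - b³ = 6z₁`, the
inequalities defining `B₁` say exactly that `b ≤ a` and `0 ≤ t₀`.
-/

open Filter Topology

namespace AbsolutelyContinuousOnInterval

variable {f : ℝ → ℝ} {a b : ℝ}

theorem pow (hf : AbsolutelyContinuousOnInterval f a b) (n : ℕ) :
    AbsolutelyContinuousOnInterval (fun t => f t ^ n) a b := by
  induction n with
  | zero =>
    simpa using (LipschitzWith.const (1 : ℝ)).lipschitzOnWith.absolutelyContinuousOnInterval
      (a := a) (b := b)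
  | succ n ih => simpa only [pow_succ] using ih.fun_mul hf

theorem monotoneOn_of_ae_deriv_nonneg (hf : AbsolutelyContinuousOnInterval f a b)
    (hf' : ∀ᵐ t ∂volume.restrict (Icc a b), 0 ≤ deriv f t) : MonotoneOn f (Icc a b) := by
  intro u hu v hv huv
  have hsub : Icc u v ⊆ Icc a b := Icc_subset_Icc hu.1 hv.2
  have hfuv : AbsolutelyContinuousOnInterval f u v :=
    hf.mono (by simpa [uIcc_of_le huv] using hsub.trans Icc_subset_uIcc)
  have := intervalIntegral.integral_nonneg_of_ae_restrict huv
    (ae_restrict_of_ae_restrict_of_subset hsub hf')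
  linarith [hfuv.integral_deriv_eq_sub]

end AbsolutelyContinuousOnInterval

theorem abs_le_abs_of_hasDerivAt_abs {f : ℝ → ℝ} {f' g' t : ℝ} (hf : HasDerivAt f f' t)
    (hg : HasDerivAt (fun u => |f u|) g' t) : |g'| ≤ |f'| := by
  rcases lt_trichotomy (f t) 0 with hneg | hzero | hpos
  · have hev : (fun u => |f u|) =ᶠ[𝓝 t] fun u => -f u := by
      filter_upwards [hf.continuousAt.preimage_mem_nhds (Iio_mem_nhds hneg)] with u hu
      exact abs_of_neg hu
    rw [hg.unique (hf.neg.congr_of_eventuallyEq hev), abs_neg]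
  · have hmin : IsLocalMin (fun u => |f u|) t :=
      Eventually.of_forall fun u => by simp [hzero]
    simp [hmin.hasDerivAt_eq_zero hg]
  · have hev : (fun u => |f u|) =ᶠ[𝓝 t] f := by
      filter_upwards [hf.continuousAt.preimage_mem_nhds (Ioi_mem_nhds hpos)] with u hu
      exact abs_of_pos hu
    rw [hg.unique (hf.congr_of_eventuallyEq hev)]

namespace P1Admissible

variable {T : ℝ} {x y z : ℝ → ℝ}

theorem absolutelyContinuousOnInterval (h : P1Admissible T x y z) :
    AbsolutelyContinuousOnInterval x 0 T ∧ AbsolutelyContinuousOnInterval y 0 T ∧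
      AbsolutelyContinuousOnInterval z 0 T := by
  obtain ⟨hT, ⟨K, hx, hy, hz⟩, -⟩ := h
  rw [← uIcc_of_le hT] at hx hy hz
  exact ⟨hx.absolutelyContinuousOnInterval, hy.absolutelyContinuousOnInterval,
    hz.absolutelyContinuousOnInterval⟩

theorem abs (h : P1Admissible T x y z) : P1Admissible T (fun t => |x t|) y z := by
  obtain ⟨hT, ⟨K, hx, hy, hz⟩, hae⟩ := h
  have hax : LipschitzOnWith K (fun t => |x t|) (Icc 0 T) := by
    simpa [Function.comp_def] using (lipschitzWith_one_norm (E := ℝ)).comp_lipschitzOnWith hx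
  have hdiff : ∀ᵐ t ∂volume.restrict (Icc 0 T), DifferentiableAt ℝ (fun t => |x t|) t := by
    rw [← uIcc_of_le hT] at hax
    rw [ae_restrict_iff' measurableSet_Icc, ← uIcc_of_le hT]
    exact hax.absolutelyContinuousOnInterval.ae_differentiableAt
  refine ⟨hT, ⟨K, hax, hy, hz⟩, ?_⟩
  filter_upwards [hae, hdiff] with t ⟨hdx, hdy, hdz, hcone, hdz_eq⟩ hda
  refine ⟨hda.hasDerivAt, hdy, hdz, ?_, by rw [sq_abs, hdz_eq]⟩
  exact (abs_le_abs_of_hasDerivAt_abs hdx hda.hasDerivAt).trans hcone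

theorem monotoneOn_sub (h : P1Admissible T x y z) :
    MonotoneOn (fun t => y t - x t) (Icc 0 T) := by
  obtain ⟨hx, hy, -⟩ := h.absolutelyContinuousOnInterval
  refine (hy.fun_sub hx).monotoneOn_of_ae_deriv_nonneg ?_
  filter_upwards [h.2.2] with t ⟨hdx, hdy, _, hcone, _⟩
  rw [(hdy.fun_sub hdx).deriv]
  linarith [le_abs_self (deriv x t)]

theorem monotoneOn_sub_cube (h : P1Admissible T x y z) :
    MonotoneOn (fun t => z t - x t ^ 3 / 6) (Icc 0 T) := by
  obtain ⟨hx, -, hz⟩ := h.absolutelyContinuousOnInterval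
  have hac : AbsolutelyContinuousOnInterval (fun t => z t - x t ^ 3 / 6) 0 T := by
    simpa only [div_eq_inv_mul] using hz.fun_sub ((hx.pow 3).const_mul 6⁻¹)
  refine hac.monotoneOn_of_ae_deriv_nonneg ?_
  filter_upwards [h.2.2] with t ⟨hdx, _, hdz, hcone, hdz_eq⟩
  have hderiv : deriv (fun t => z t - x t ^ 3 / 6) t
      = x t ^ 2 * (deriv y t - deriv x t) / 2 := by
    rw [(hdz.fun_sub ((hdx.fun_pow 3).div_const 6)).deriv, hdz_eq]
    push_cast
    ring
  rw [hderiv]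
  have : 0 ≤ deriv y t - deriv x t := by linarith [le_abs_self (deriv x t)]
  positivity

theorem monotoneOn_upperBound_sub (h : P1Admissible T x y z)
    (hx₀ : ∀ t ∈ Icc 0 T, 0 ≤ x t) (hxy : ∀ t ∈ Icc 0 T, x t ≤ y t) :
    MonotoneOn
      (fun t => (y t ^ 3 + 3 * x t ^ 2 * y t + 3 * x t * y t ^ 2 - 3 * x t ^ 3) / 24 - z t)
      (Icc 0 T) := by
  obtain ⟨hx, hy, hz⟩ := h.absolutelyContinuousOnInterval
  have hac : AbsolutelyContinuousOnInterval
      (fun t => (y t ^ 3 + 3 * x t ^ 2 * y t + 3 * x t * y t ^ 2 - 3 * x t ^ 3) / 24 - z t)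
      0 T := by
    have := ((((hy.pow 3).fun_add (((hx.pow 2).fun_mul hy).const_mul 3)).fun_add
      ((hx.fun_mul (hy.pow 2)).const_mul 3)).fun_sub ((hx.pow 3).const_mul 3)).const_mul 24⁻¹
      |>.fun_sub hz
    refine (funext fun t => ?_ : (fun t => _) = _) ▸ this
    ring
  refine hac.monotoneOn_of_ae_deriv_nonneg ?_
  filter_upwards [h.2.2, ae_restrict_mem measurableSet_Icc]
    with t ⟨hdx, hdy, hdz, hcone, hdz_eq⟩ ht
  -- `(y + x)² - 4x² = (y + 3x)(y - x)` is what makes the derivative factor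
  have hderiv : deriv (fun t => (y t ^ 3 + 3 * x t ^ 2 * y t + 3 * x t * y t ^ 2
      - 3 * x t ^ 3) / 24 - z t) t
      = (y t + 3 * x t) * (y t - x t) * (deriv y t + deriv x t) / 8 := by
    have := ((((hdy.fun_pow 3).fun_add (((hdx.fun_pow 2).fun_mul hdy).const_mul 3)).fun_add
      ((hdx.fun_mul (hdy.fun_pow 2)).const_mul 3)).fun_sub
      ((hdx.fun_pow 3).const_mul 3)).div_const 24 |>.fun_sub hdz
    rw [(this.congr_of_eventuallyEq (Eventually.of_forall fun u => by ring)).deriv, hdz_eq]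
    push_cast
    ring
  rw [hderiv]
  have h₁ : 0 ≤ y t + 3 * x t := by linarith [hx₀ t ht, hxy t ht]
  have h₂ : 0 ≤ y t - x t := by linarith [hxy t ht]
  have h₃ : 0 ≤ deriv y t + deriv x t := by linarith [neg_abs_le (deriv x t)]
  positivity

theorem of_lipschitzWith (hT : 0 ≤ T) (hx : LipschitzWith 1 x) :
    P1Admissible T x id (fun t => ∫ s in 0..t, x s ^ 2 / 2) := by
  have hz : ∀ t, HasDerivAt (fun t => ∫ s in 0..t, x s ^ 2 / 2) (x t ^ 2 / 2) t := fun t =>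
    (((hx.continuous.pow 2).div_const 2).integral_hasStrictDerivAt 0 t).hasDerivAt
  obtain ⟨M, hM⟩ :=
    isCompact_Icc.exists_bound_of_continuousOn (s := Icc 0 T) hx.continuous.continuousOn
  have hzlip : LipschitzOnWith (Real.toNNReal (M ^ 2 / 2)) (fun t => ∫ s in 0..t, x s ^ 2 / 2)
      (Icc 0 T) := by
    refine (convex_Icc 0 T).lipschitzOnWith_of_nnnorm_hasDerivWithin_le
      (fun t _ => (hz t).hasDerivWithinAt) fun t ht => ?_
    rw [← NNReal.coe_le_coe, coe_nnnorm, Real.coe_toNNReal _ (by positivity), Real.norm_eq_abs,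
      abs_div, abs_pow, abs_two]
    have hxt : |x t| ≤ M := by simpa using hM t ht
    gcongr
  refine ⟨hT, ⟨max 1 (Real.toNNReal (M ^ 2 / 2)), hx.lipschitzOnWith.weaken (le_max_left _ _),
    LipschitzWith.id.lipschitzOnWith.weaken (le_max_left _ _), hzlip.weaken (le_max_right _ _)⟩, ?_⟩
  refine ae_restrict_of_ae ?_
  filter_upwards [hx.ae_differentiableAt] with t hdx
  refine ⟨hdx.hasDerivAt, by simpa using hasDerivAt_id t, by rw [(hz t).deriv]; exact hz t, ?_,
    by rw [(hz t).deriv, deriv_id, mul_one]⟩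
  simpa using norm_deriv_le_of_lipschitz hx (x₀ := t)

end P1Admissible

theorem P1Reaches.mem_B1 {q₁ : ℝ × ℝ × ℝ} (h : P1Reaches q₁) : q₁ ∈ B1 := by
  obtain ⟨T, x, y, z, hadm, hx₀, hy₀, hz₀, rfl⟩ := h
  have habs := hadm.abs
  have h₀ : (0 : ℝ) ∈ Icc 0 T := left_mem_Icc.2 hadm.1
  have hT : T ∈ Icc 0 T := right_mem_Icc.2 hadm.1
  have hxy : ∀ t ∈ Icc 0 T, |x t| ≤ y t := fun t ht => by
    simpa [hx₀, hy₀] using habs.monotoneOn_sub h₀ ht ht.1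
  have hlow := habs.monotoneOn_sub_cube h₀ hT hadm.1
  have hup := habs.monotoneOn_upperBound_sub (fun t _ => abs_nonneg _) hxy h₀ hT hadm.1
  simp only [hx₀, hy₀, hz₀, abs_zero] at hlow hup
  refine ⟨hxy T hT, by linarith, ?_⟩
  rw [← sq_abs (x T)]
  linarith

def tent (t₀ h : ℝ) (t : ℝ) : ℝ := max 0 (min (t - t₀) (t₀ + 2 * h - t))

section Tent

variable {t₀ h s : ℝ}

theorem lipschitzWith_tent : LipschitzWith 1 (tent t₀ h) := by
  refine LipschitzWith.of_dist_le_mul fun s u => ?_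
  simp only [tent, Real.dist_eq, NNReal.coe_one, one_mul]
  calc |max 0 (min (s - t₀) (t₀ + 2 * h - s)) - max 0 (min (u - t₀) (t₀ + 2 * h - u))|
      ≤ |min (s - t₀) (t₀ + 2 * h - s) - min (u - t₀) (t₀ + 2 * h - u)| := by
        rw [max_comm 0, max_comm 0]; exact abs_max_sub_max_le_abs _ _ _
    _ ≤ max |s - t₀ - (u - t₀)| |t₀ + 2 * h - s - (t₀ + 2 * h - u)| :=
        abs_min_sub_min_le_max _ _ _ _
    _ = |s - u| := by
        rw [sub_sub_sub_cancel_right, sub_sub_sub_cancel_left, abs_sub_comm u, max_self]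

theorem tent_of_le (hs : s ≤ t₀) : tent t₀ h s = 0 := by
  unfold tent; grind

theorem tent_of_mem_Icc_left (hs : s ∈ Icc t₀ (t₀ + h)) : tent t₀ h s = s - t₀ := by
  unfold tent; grind

theorem tent_of_mem_Icc_right (hs : s ∈ Icc (t₀ + h) (t₀ + 2 * h)) :
    tent t₀ h s = t₀ + 2 * h - s := by
  unfold tent; grind

theorem integral_tent_sq {T : ℝ} (ht₀ : 0 ≤ t₀) (hT₁ : t₀ + h ≤ T) (hT₂ : T ≤ t₀ + 2 * h) :
    ∫ s in 0..T, tent t₀ h s ^ 2 / 2 = (2 * h ^ 3 - (t₀ + 2 * h - T) ^ 3) / 6 := by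
  have hint : ∀ a b, IntervalIntegrable (fun s => tent t₀ h s ^ 2 / 2) volume a b := fun a b =>
    ((lipschitzWith_tent.continuous.pow 2).div_const 2).intervalIntegrable a b
  have h₁ : ∫ s in 0..t₀, tent t₀ h s ^ 2 / 2 = 0 := by
    rw [intervalIntegral.integral_congr (g := fun _ => 0), intervalIntegral.integral_zero]
    intro s hs
    rw [uIcc_of_le ht₀] at hs
    simp [tent_of_le hs.2]
  have h₂ : ∫ s in t₀..t₀ + h, tent t₀ h s ^ 2 / 2 = h ^ 3 / 6 := by
    rw [intervalIntegral.integral_eq_sub_of_hasDerivAt (f := fun s => (s - t₀) ^ 3 / 6)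
      (fun s hs => ?_) (hint _ _)]
    · ring
    rw [uIcc_of_le (by linarith)] at hs
    rw [tent_of_mem_Icc_left hs]
    exact ((((hasDerivAt_id' s).sub_const t₀).fun_pow 3).div_const 6).congr_deriv (by ring)
  have h₃ : ∫ s in t₀ + h..T, tent t₀ h s ^ 2 / 2 = (h ^ 3 - (t₀ + 2 * h - T) ^ 3) / 6 := by
    rw [intervalIntegral.integral_eq_sub_of_hasDerivAt (f := fun s => -(t₀ + 2 * h - s) ^ 3 / 6)
      (fun s hs => ?_) (hint _ _)]
    · ring
    rw [uIcc_of_le hT₁] at hs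
    rw [tent_of_mem_Icc_right ⟨hs.1, hs.2.trans hT₂⟩]
    exact ((((hasDerivAt_id' s).const_sub (t₀ + 2 * h)).fun_pow 3).fun_neg.div_const 6).congr_deriv
      (by ring)
  rw [← intervalIntegral.integral_add_adjacent_intervals (hint 0 t₀) (hint t₀ T),
    ← intervalIntegral.integral_add_adjacent_intervals (hint t₀ (t₀ + h)) (hint (t₀ + h) T),
    h₁, h₂, h₃]
  ring

end Tent

theorem P1Reaches.of_mem_B1 {q₁ : ℝ × ℝ × ℝ} (hq : q₁ ∈ B1) : P1Reaches q₁ := by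
  obtain ⟨x₁, y₁, z₁⟩ := q₁
  obtain ⟨hxy, hlow, hup⟩ := hq
  dsimp only at hxy hlow hup
  rw [← sq_abs x₁] at hup
  set b := |x₁| with hb
  have hb₀ : 0 ≤ b := abs_nonneg x₁
  obtain ⟨σ, hσ, hσx⟩ : ∃ σ : ℝ, |σ| = 1 ∧ σ * b = x₁ := by
    rcases le_or_gt 0 x₁ with hx₁ | hx₁
    · exact ⟨1, abs_one, by rw [one_mul, hb, abs_of_nonneg hx₁]⟩
    · exact ⟨-1, by simp, by rw [hb, abs_of_neg hx₁]; ring⟩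
  obtain ⟨a, ha₀, ha₃⟩ : ∃ a : ℝ, 0 ≤ a ∧ a ^ 3 = (6 * z₁ + b ^ 3) / 2 := by
    have hc : 0 ≤ (6 * z₁ + b ^ 3) / 2 := by nlinarith [pow_nonneg hb₀ 3]
    exact ⟨_, Real.rpow_nonneg hc _, Real.rpow_inv_natCast_pow hc three_ne_zero⟩
  have hba : b ≤ a := le_of_pow_le_pow_left₀ three_ne_zero ha₀ (by linarith)
  have hay : 2 * a ≤ y₁ + b :=
    le_of_pow_le_pow_left₀ three_ne_zero (by linarith) (by rw [mul_pow, ha₃]; nlinarith)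
  set t₀ := y₁ + b - 2 * a with ht₀
  have hx : LipschitzWith 1 fun t => σ * tent t₀ a t := by
    refine LipschitzWith.of_dist_le_mul fun s u => ?_
    simpa [Real.dist_eq, ← mul_sub, abs_mul, hσ] using lipschitzWith_tent.dist_le_mul s u
  refine ⟨y₁, _, id, _, P1Admissible.of_lipschitzWith (hb₀.trans hxy) hx,
    by simp [tent_of_le (show (0 : ℝ) ≤ t₀ by linarith)], rfl, by simp, ?_⟩
  have hσ₂ : σ ^ 2 = 1 := by rw [← sq_abs, hσ, one_pow]
  have hend : tent t₀ a y₁ = b := by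
    rw [tent_of_mem_Icc_right ⟨by linarith, by linarith⟩, ht₀]
    ring
  simp only [id, mul_pow, hσ₂, one_mul, hend, hσx, Prod.mk.injEq, true_and]
  rw [integral_tent_sq (by linarith) (by linarith) (by linarith), ha₃]
  ring

/-- The attainable set of the first flat sub-Lorentzian Martinet problem from the
origin (the causal future of the origin) is exactly `B₁`. -/
theorem attainable_set_eq_B1 (q₁ : ℝ × ℝ × ℝ) : q₁ ∈ B1 ↔ P1Reaches q₁ :=
  ⟨P1Reaches.of_mem_B1, P1Reaches.mem_B1⟩
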